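/- arXiv:1210.7577 — 3 statements merged into one kernel-verified Lean document; each statement's English description precedes it below -/
import Mathlib

section
/- Let F be a field, R an Artinian local F-algebra with residue field l of finite degree over F, and l₀ the separable closure of F in l. Then there exists a unique F-algebra homomorphism s : l₀ → R lifting the inclusion l₀ → l along the residue map R → l (Hensel lifting of the separable subextension). -/
/-! A separable algebraic extension is formally étale, and the maximal ideal of an Artinian
local ring is nilpotent, so the infinitesimal lifting property of formally étale algebras
lifts the inclusion `l₀ → l` along `R → R ⧸ m` in exactly one way. -/

namespace Algebra.FormallyEtale

variable {R A B : Type*} [CommRing R] [CommRing A] [Algebra R A] [CommRing B] [Algebra R B]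
  [FormallyEtale R A]

theorem existsUnique_lift (I : Ideal B) (hI : IsNilpotent I) (g : A →ₐ[R] B ⧸ I) :
    ∃! f : A →ₐ[R] B, (Ideal.Quotient.mkₐ R I).comp f = g := by
  obtain ⟨f, hf⟩ := FormallySmooth.exists_lift I hI g
  exact ⟨f, hf, fun f' hf' ↦ FormallyUnramified.lift_unique I hI f' f (hf'.trans hf.symm)⟩

theorem existsUnique_lift_residue [IsLocalRing B] [IsArtinianRing B]
    (g : A →ₐ[R] IsLocalRing.ResidueField B) :
    ∃! f : A →ₐ[R] B, ∀ x, IsLocalRing.residue B (f x) = g x := by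
  have hnil : IsNilpotent (IsLocalRing.maximalIdeal B) :=
    (isArtinianRing_iff_isNilpotent_maximalIdeal B).mp inferInstance
  refine (existsUnique_congr fun f ↦ ?_).mp (existsUnique_lift _ hnil g)
  exact AlgHom.ext_iff

end Algebra.FormallyEtale

theorem hensel_lift_separable_closure_general (F R : Type) [Field F] [CommRing R]
    [Algebra F R] [IsArtinianRing R] [IsLocalRing R] :
    ∃! s : (separableClosure F (IsLocalRing.ResidueField R)) →ₐ[F] R,
      ∀ x : separableClosure F (IsLocalRing.ResidueField R),
        IsLocalRing.residue R (s x) = (x : IsLocalRing.ResidueField R) := by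
  have : Algebra.FormallyEtale F (separableClosure F (IsLocalRing.ResidueField R)) :=
    .of_isSeparable F _
  exact Algebra.FormallyEtale.existsUnique_lift_residue (separableClosure F _).val

/-- **Hensel lifting of the separable residue subextension.**
Let `F` be a field, `R` an Artinian local `F`-algebra whose residue field `l` is of finite
degree over `F`, and `l₀` the separable closure of `F` in `l`.  Then there is a unique
`F`-algebra homomorphism `s : l₀ → R` lifting the inclusion `l₀ → l` along the residue
map `R → l`. -/
theorem hensel_lift_separable_closure (F R : Type) [Field F] [CommRing R]
    [Algebra F R] [IsArtinianRing R] [IsLocalRing R]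
    [Module.Finite F (IsLocalRing.ResidueField R)] :
    ∃! s : (separableClosure F (IsLocalRing.ResidueField R)) →ₐ[F] R,
      ∀ x : separableClosure F (IsLocalRing.ResidueField R),
        IsLocalRing.residue R (s x) = (x : IsLocalRing.ResidueField R) :=
  hensel_lift_separable_closure_general F R
end

section
/- Let A be a cohomological, weakly additive, and weakly topologically invariant Mackey functor, U a smooth affine curve over k, D an effective divisor on U viewed as a closed subscheme ι_D : D → U finite over k. Then for every a ∈ A(U), the evaluation a(D) (defined pointwise via ∑ n_x Cor_{k(x)/k} ι_x^*a) equals Cor_{D/k}(ι_D^* a), the transfer from A(D) to A(k) applied to the restriction of a. -/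
/-- A (continuous) Mackey functor on affine `k`-schemes, i.e. on commutative `k`-algebras,
with contravariant maps `res` (restriction, `A^*`) along all morphisms and covariant
transfer maps `tr` (`A_*`, `Cor`) along (finite flat) morphisms.  Note that `res` goes in
the ring direction, i.e. `A^*(Spec S → Spec R) : A(R) → A(S)` for a `k`-algebra map
`R → S`. -/
structure MackeyFunctor (k : Type) [Field k] : Type 1 where
  obj : (R : Type) → [CommRing R] → [Algebra k R] → Type
  addCommGroup : (R : Type) → [CommRing R] → [Algebra k R] → AddCommGroup (obj R)
  res : {R S : Type} → [CommRing R] → [CommRing S] → [Algebra k R] → [Algebra k S] →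
      (R →ₐ[k] S) → @AddMonoidHom (obj R) (obj S)
        (by exact (addCommGroup R).toAddMonoid.toAddZeroClass.toAddZero)
        (by exact (addCommGroup S).toAddMonoid.toAddZeroClass.toAddZero)
  tr : {R S : Type} → [CommRing R] → [CommRing S] → [Algebra k R] → [Algebra k S] →
      (R →ₐ[k] S) → @AddMonoidHom (obj S) (obj R)
        (by exact (addCommGroup S).toAddMonoid.toAddZeroClass.toAddZero)
        (by exact (addCommGroup R).toAddMonoid.toAddZeroClass.toAddZero)

attribute [instance] MackeyFunctor.addCommGroup

namespace MackeyFunctor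

variable {k : Type} [Field k]

/-- Functoriality axioms for a Mackey functor. -/
structure IsMackey (M : MackeyFunctor k) : Prop where
  res_id : ∀ (R : Type) [CommRing R] [Algebra k R] (a : M.obj R),
    M.res (AlgHom.id k R) a = a
  tr_id : ∀ (R : Type) [CommRing R] [Algebra k R] (a : M.obj R),
    M.tr (AlgHom.id k R) a = a
  res_comp : ∀ {R S T : Type} [CommRing R] [CommRing S] [CommRing T]
      [Algebra k R] [Algebra k S] [Algebra k T] (f : R →ₐ[k] S) (g : S →ₐ[k] T)
      (a : M.obj R), M.res (g.comp f) a = M.res g (M.res f a)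
  tr_comp : ∀ {R S T : Type} [CommRing R] [CommRing S] [CommRing T]
      [Algebra k R] [Algebra k S] [Algebra k T] (f : R →ₐ[k] S) (g : S →ₐ[k] T)
      (a : M.obj T), M.tr (g.comp f) a = M.tr f (M.tr g a)

/-- `A` is cohomological: for a finite flat morphism of constant degree `d`
(encoded as: `S` is a free `R`-module of rank `d`), `A_*(f) ∘ A^*(f) = d`. -/
def Cohomological (M : MackeyFunctor k) : Prop :=
  ∀ (R S : Type) [CommRing R] [CommRing S] [Algebra k R] [Algebra k S]
    [Algebra R S] [IsScalarTower k R S] [Module.Free R S] (d : ℕ),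
    Module.finrank R S = d →
    ∀ a : M.obj R,
      M.tr (IsScalarTower.toAlgHom k R S) (M.res (IsScalarTower.toAlgHom k R S) a) = d • a

/-- `A` is weakly additive: for finite flat `f : X → S`, `f' : X' → S`,
`A_*(f ⊔ f') = A_*(f)∘A^*(ι) + A_*(f')∘A^*(ι')`; in ring-theoretic terms the
disjoint union `X ⊔ X'` is `Spec (B × B')`. -/
def WeaklyAdditive (M : MackeyFunctor k) : Prop :=
  ∀ (C B B' : Type) [CommRing C] [CommRing B] [CommRing B']
    [Algebra k C] [Algebra k B] [Algebra k B']
    [Algebra C B] [Algebra C B'] [IsScalarTower k C B] [IsScalarTower k C B']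
    [Module.Finite C B] [Module.Flat C B] [Module.Finite C B'] [Module.Flat C B'],
    ∀ a : M.obj (B × B'),
      M.tr (IsScalarTower.toAlgHom k C (B × B')) a =
        M.tr (IsScalarTower.toAlgHom k C B) (M.res (AlgHom.fst k B B') a) +
        M.tr (IsScalarTower.toAlgHom k C B') (M.res (AlgHom.snd k B B') a)

/-- `A` is weakly topologically invariant: for an Artinian local `F`-algebra `R` of
length `d` (encoded by `dim_F R = d · [l : F]`) with residue field `l` finite over `F`,
`A_*(p_R) = d • A_*(p_l) ∘ A^*(ι)`. -/
def WeaklyTopologicallyInvariant (M : MackeyFunctor k) : Prop :=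
  ∀ (F R : Type) [Field F] [CommRing R] [Algebra k F] [Algebra k R]
    [Algebra F R] [IsScalarTower k F R] [IsArtinianRing R] [IsLocalRing R]
    [Module.Finite F R] (d : ℕ),
    Module.finrank F R = d * Module.finrank F (R ⧸ IsLocalRing.maximalIdeal R) →
    ∀ a : M.obj R,
      M.tr (IsScalarTower.toAlgHom k F R) a =
        d • M.tr (IsScalarTower.toAlgHom k F (R ⧸ IsLocalRing.maximalIdeal R))
          (M.res (Ideal.Quotient.mkₐ k (IsLocalRing.maximalIdeal R)) a)

/-- The evaluation pairing `A(U) × Div(U) → A(k)`, `(a, D) ↦ a(D) = ∑ n_x Cor_{k(x)/k}(ι_x^* a)`,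
for `U = Spec R` a smooth affine curve (divisors are functions on closed points,
assumed finitely supported where relevant). -/
noncomputable def eval (M : MackeyFunctor k) (R : Type) [CommRing R] [Algebra k R]
    (a : M.obj R) (D : MaximalSpectrum R → ℤ) : M.obj k :=
  ∑ᶠ p : MaximalSpectrum R,
    D p • M.tr (Algebra.ofId k (R ⧸ p.asIdeal)) (M.res (Ideal.Quotient.mkₐ k p.asIdeal) a)

end MackeyFunctor

/-!
By the Chinese remainder theorem `R ⧸ ∏ p ^ n_p ≅ ∏ R ⧸ p ^ n_p`, and weak additivity turns the
transfer from the product into the sum of the transfers from the factors. Each `R ⧸ p ^ n` is an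
Artinian local `k`-algebra with residue field `R ⧸ p`, and since `p ^ j / p ^ (j + 1) ≅ R ⧸ p` in a
Dedekind domain its `k`-dimension is `n · [R ⧸ p : k]`, so weak topological invariance contributes
the multiplicity `n`. Being cohomological in degree one makes transfers invariant under the
isomorphisms involved.
-/

namespace Ideal

variable {k R : Type*} [Field k] [CommRing R] [Algebra k R]

noncomputable def quotientMulAlgEquivQuotientProd (I J : Ideal R) (h : IsCoprime I J) :
    (R ⧸ I * J) ≃ₐ[k] (R ⧸ I) × (R ⧸ J) :=
  AlgEquiv.ofRingEquiv (f := quotientMulEquivQuotientProd I J h) fun _ => rfl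

theorem isMaximal_map_mk_pow (p : Ideal R) [hp : p.IsMaximal] {n : ℕ} (hn : n ≠ 0) :
    (p.map (Quotient.mk (p ^ n))).IsMaximal := by
  refine (map_eq_top_or_isMaximal_of_surjective _ Quotient.mk_surjective hp).resolve_left
    fun h => hp.ne_top ?_
  rw [← comap_map_mk (pow_le_self hn : p ^ n ≤ p), h, comap_top]

theorem isLocalRing_quotient_pow (p : Ideal R) [p.IsMaximal] {n : ℕ} (hn : n ≠ 0) :
    IsLocalRing (R ⧸ p ^ n) := by
  have hmax := isMaximal_map_mk_pow p hn
  refine .of_unique_max_ideal ⟨_, hmax, fun m hm => ?_⟩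
  have : (p.map (Quotient.mk (p ^ n))) ^ n ≤ m := by
    rw [← Ideal.map_pow, map_quotient_self]; exact bot_le
  exact (hmax.eq_of_le hm.ne_top (hm.isPrime.le_of_pow_le this)).symm

section IsDedekindDomain

variable [IsDedekindDomain R]

/-- Multiplication by `a ∈ p ^ n ∖ p ^ (n + 1)` identifies `R ⧸ p` with the kernel of
`R ⧸ p ^ (n + 1) → R ⧸ p ^ n`. -/
theorem rank_quotient_pow_succ (p : Ideal R) [hp : p.IsMaximal] (hp0 : p ≠ ⊥) (n : ℕ) :
    Module.rank k (R ⧸ p ^ (n + 1)) = Module.rank k (R ⧸ p ^ n) + Module.rank k (R ⧸ p) := by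
  obtain ⟨a, ha, ha'⟩ := exists_mem_pow_notMem_pow_succ p hp0 hp.ne_top n
  have hle : p ^ (n + 1) ≤ p ^ n := pow_le_pow_right n.le_succ
  let π := Quotient.factorₐ k hle
  let μ : R →ₗ[k] R ⧸ p ^ (n + 1) := (Quotient.mkₐ k _).toLinearMap ∘ₗ LinearMap.mulLeft k a
  have hker : LinearMap.ker μ = p.restrictScalars k := by
    ext r
    change Quotient.mk _ (a * r) = 0 ↔ r ∈ p
    rw [Quotient.eq_zero_iff_mem]
    refine ⟨fun h => (IsPrime.mem_pow_mul p h).resolve_left ha', fun hr => ?_⟩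
    rw [pow_succ]
    exact mul_mem_mul ha hr
  have hspan : span {a} ⊔ p ^ (n + 1) = p ^ n := by
    refine eq_prime_pow_of_succ_lt_of_le hp0 (lt_of_le_of_ne le_sup_right fun h => ha' ?_)
      (sup_le ((span_singleton_le_iff_mem _).mpr ha) hle)
    exact h ▸ mem_sup_left (mem_span_singleton_self a)
  have hrange : LinearMap.range μ = LinearMap.ker π.toLinearMap := by
    ext x
    obtain ⟨x, rfl⟩ := Quotient.mk_surjective x
    change (∃ r, Quotient.mk _ (a * r) = Quotient.mk _ x) ↔ Quotient.mk (p ^ n) x = 0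
    rw [Quotient.eq_zero_iff_mem, ← hspan, Submodule.mem_sup]
    constructor
    · rintro ⟨r, hr⟩
      refine ⟨a * r, mul_mem_right _ _ (mem_span_singleton_self a), x - a * r, ?_, by ring⟩
      rw [← Quotient.eq, hr]
    · rintro ⟨_, hc, v, hv, rfl⟩
      obtain ⟨c, rfl⟩ := mem_span_singleton'.mp hc
      refine ⟨c, ?_⟩
      rw [Quotient.eq, ← sub_sub, mul_comm, sub_self, zero_sub, neg_mem_iff]
      exact hv
  rw [← LinearMap.rank_range_add_rank_ker π.toLinearMap,
    LinearMap.range_eq_top.2 (Quotient.factor_surjective hle), rank_top, ← hrange,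
    ← μ.quotKerEquivRange.rank_eq, hker, (Submodule.Quotient.restrictScalarsEquiv k p).rank_eq]

theorem rank_quotient_pow (p : Ideal R) [p.IsMaximal] (hp0 : p ≠ ⊥) (n : ℕ) :
    Module.rank k (R ⧸ p ^ n) = n * Module.rank k (R ⧸ p) := by
  induction n with
  | zero =>
    rw [pow_zero, one_eq_top, Nat.cast_zero, zero_mul]
    exact rank_zero_iff.mpr inferInstance
  | succ n ih => rw [rank_quotient_pow_succ p hp0, ih, Nat.cast_succ, add_one_mul]

theorem finrank_quotient_pow (p : Ideal R) [p.IsMaximal] (hp0 : p ≠ ⊥)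
    [Module.Finite k (R ⧸ p)] (n : ℕ) :
    Module.finrank k (R ⧸ p ^ n) = n * Module.finrank k (R ⧸ p) :=
  Module.finrank_eq_of_rank_eq <| by
    rw [rank_quotient_pow p hp0, ← Module.finrank_eq_rank, Nat.cast_mul]

theorem finite_quotient_of_ne_bot [Algebra.FiniteType k R] {I : Ideal R} (hI : I ≠ ⊥) :
    Module.Finite k (R ⧸ I) := by
  rw [Module.finite_iff_krullDimLE_zero,
    krullDimLE_zero_quotient_iff_forall_minimalPrimes_isMaximal]
  exact fun J hJ => hJ.1.1.isMaximal (ne_bot_of_le_ne_bot hI hJ.1.2)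

end IsDedekindDomain

end Ideal

namespace MackeyFunctor

section

variable {k : Type} [Field k] {M : MackeyFunctor k}

theorem tr_res_algEquiv (hcoh : M.Cohomological) {B₁ B₂ : Type} [CommRing B₁] [CommRing B₂]
    [Algebra k B₁] [Algebra k B₂] (e : B₁ ≃ₐ[k] B₂) (x : M.obj B₁) :
    M.tr e.toAlgHom (M.res e.toAlgHom x) = x := by
  let _ : Algebra B₁ B₂ := e.toRingHom.toAlgebra
  have : IsScalarTower k B₁ B₂ := .of_algebraMap_eq fun r => (e.commutes r).symm
  let eL : B₁ ≃ₗ[B₁] B₂ := LinearEquiv.ofBijective (Algebra.linearMap B₁ B₂) e.bijective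
  have : Module.Free B₁ B₂ := .of_equiv eL
  have hrank : Module.finrank B₁ B₂ = 1 := by
    rw [← eL.finrank_eq]
    nontriviality B₁
    exact Module.finrank_self B₁
  have he : IsScalarTower.toAlgHom k B₁ B₂ = e.toAlgHom := rfl
  simpa [he] using hcoh B₁ B₂ 1 hrank x

theorem tr_ofId_eq_tr_ofId_res (hM : M.IsMackey) (hcoh : M.Cohomological)
    {B₁ B₂ : Type} [CommRing B₁] [CommRing B₂] [Algebra k B₁] [Algebra k B₂]
    (e : B₁ ≃ₐ[k] B₂) (x : M.obj B₁) :
    M.tr (Algebra.ofId k B₁) x = M.tr (Algebra.ofId k B₂) (M.res e.toAlgHom x) := by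
  rw [show Algebra.ofId k B₂ = e.toAlgHom.comp (Algebra.ofId k B₁) from Subsingleton.elim _ _,
    hM.tr_comp, tr_res_algEquiv hcoh]

theorem tr_ofId_prod (hadd : M.WeaklyAdditive) {B B' : Type} [CommRing B] [CommRing B']
    [Algebra k B] [Algebra k B'] [Module.Finite k B] [Module.Finite k B'] (x : M.obj (B × B')) :
    M.tr (Algebra.ofId k (B × B')) x =
      M.tr (Algebra.ofId k B) (M.res (AlgHom.fst k B B') x) +
        M.tr (Algebra.ofId k B') (M.res (AlgHom.snd k B B') x) :=
  hadd k B B' x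

theorem tr_ofId_of_isLocalRing (htop : M.WeaklyTopologicallyInvariant) {A : Type} [CommRing A]
    [Algebra k A] [IsLocalRing A] [Module.Finite k A] {d : ℕ}
    (hd : Module.finrank k A = d * Module.finrank k (A ⧸ IsLocalRing.maximalIdeal A))
    (x : M.obj A) :
    M.tr (Algebra.ofId k A) x = d • M.tr (Algebra.ofId k (A ⧸ IsLocalRing.maximalIdeal A))
      (M.res (Ideal.Quotient.mkₐ k (IsLocalRing.maximalIdeal A)) x) :=
  have : IsArtinianRing A := .of_finite k A
  htop k A d hd x

theorem tr_ofId_eq_zero_of_subsingleton (hM : M.IsMackey) (hcoh : M.Cohomological)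
    (hadd : M.WeaklyAdditive) {S : Type} [CommRing S] [Algebra k S] [Subsingleton S]
    (x : M.obj S) : M.tr (Algebra.ofId k S) x = 0 := by
  let e : S ≃ₐ[k] S × S := AlgEquiv.ofBijective ((AlgHom.id k S).prod (AlgHom.id k S))
    ⟨fun _ _ _ => Subsingleton.elim _ _, fun _ => ⟨0, Subsingleton.elim _ _⟩⟩
  have hfst : (AlgHom.fst k S S).comp e.toAlgHom = AlgHom.id k S := rfl
  have hsnd : (AlgHom.snd k S S).comp e.toAlgHom = AlgHom.id k S := rfl
  -- `S ≅ S × S`, so weak additivity reads `t = t + t`.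
  have h := tr_ofId_prod hadd (M.res e.toAlgHom x)
  rw [← tr_ofId_eq_tr_ofId_res hM hcoh, ← hM.res_comp, ← hM.res_comp, hfst, hsnd, hM.res_id] at h
  exact left_eq_add.mp h

theorem tr_ofId_res_mk_pow (hM : M.IsMackey) (hcoh : M.Cohomological) (hadd : M.WeaklyAdditive)
    (htop : M.WeaklyTopologicallyInvariant) {R : Type} [CommRing R] [IsDedekindDomain R]
    [Algebra k R] [Algebra.FiniteType k R] (p : Ideal R) [p.IsMaximal] (hp0 : p ≠ ⊥) (n : ℕ)
    (a : M.obj R) :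
    M.tr (Algebra.ofId k (R ⧸ p ^ n)) (M.res (Ideal.Quotient.mkₐ k (p ^ n)) a) =
      n • M.tr (Algebra.ofId k (R ⧸ p)) (M.res (Ideal.Quotient.mkₐ k p) a) := by
  rcases eq_or_ne n 0 with rfl | hn
  · have : Subsingleton (R ⧸ p ^ 0) := by rw [pow_zero, Ideal.one_eq_top]; infer_instance
    rw [tr_ofId_eq_zero_of_subsingleton hM hcoh hadd, zero_smul]
  have : Module.Finite k (R ⧸ p) := Ideal.finite_quotient_of_ne_bot hp0
  have : Module.Finite k (R ⧸ p ^ n) := Ideal.finite_quotient_of_ne_bot (pow_ne_zero n hp0)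
  have := Ideal.isLocalRing_quotient_pow p hn
  have hmax : IsLocalRing.maximalIdeal (R ⧸ p ^ n) = p.map (Ideal.Quotient.mkₐ k (p ^ n)) :=
    (IsLocalRing.eq_maximalIdeal (Ideal.isMaximal_map_mk_pow p hn)).symm
  let φ : ((R ⧸ p ^ n) ⧸ IsLocalRing.maximalIdeal (R ⧸ p ^ n)) ≃ₐ[k] R ⧸ p :=
    (Ideal.quotientEquivAlgOfEq k hmax).trans
      (DoubleQuot.quotQuotEquivQuotOfLEₐ k (Ideal.pow_le_self hn))
  have hrank : Module.finrank k (R ⧸ p ^ n) =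
      n * Module.finrank k ((R ⧸ p ^ n) ⧸ IsLocalRing.maximalIdeal (R ⧸ p ^ n)) := by
    rw [φ.toLinearEquiv.finrank_eq, Ideal.finrank_quotient_pow p hp0]
  have hφ : (φ.toAlgHom.comp (Ideal.Quotient.mkₐ k _)).comp (Ideal.Quotient.mkₐ k (p ^ n)) =
      Ideal.Quotient.mkₐ k p := AlgHom.ext fun _ => rfl
  rw [tr_ofId_of_isLocalRing htop hrank, tr_ofId_eq_tr_ofId_res hM hcoh φ, ← hM.res_comp,
    ← hM.res_comp, hφ]

theorem tr_ofId_res_mk_mul (hM : M.IsMackey) (hcoh : M.Cohomological) (hadd : M.WeaklyAdditive)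
    {R : Type} [CommRing R] [Algebra k R] {I J : Ideal R} (h : IsCoprime I J)
    [Module.Finite k (R ⧸ I)] [Module.Finite k (R ⧸ J)] (a : M.obj R) :
    M.tr (Algebra.ofId k (R ⧸ I * J)) (M.res (Ideal.Quotient.mkₐ k (I * J)) a) =
      M.tr (Algebra.ofId k (R ⧸ I)) (M.res (Ideal.Quotient.mkₐ k I) a) +
        M.tr (Algebra.ofId k (R ⧸ J)) (M.res (Ideal.Quotient.mkₐ k J) a) := by
  rw [tr_ofId_eq_tr_ofId_res hM hcoh (Ideal.quotientMulAlgEquivQuotientProd I J h),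
    tr_ofId_prod hadd, ← hM.res_comp, ← hM.res_comp, ← hM.res_comp, ← hM.res_comp]
  rfl

theorem tr_ofId_res_mk_prod (hM : M.IsMackey) (hcoh : M.Cohomological) (hadd : M.WeaklyAdditive)
    (htop : M.WeaklyTopologicallyInvariant) {R : Type} [CommRing R] [IsDedekindDomain R]
    [Algebra k R] [Algebra.FiniteType k R] (hR : ¬ IsField R) (n : MaximalSpectrum R → ℕ)
    (s : Finset (MaximalSpectrum R)) (a : M.obj R) :
    M.tr (Algebra.ofId k (R ⧸ ∏ p ∈ s, p.asIdeal ^ n p))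
        (M.res (Ideal.Quotient.mkₐ k (∏ p ∈ s, p.asIdeal ^ n p)) a) =
      ∑ p ∈ s, n p • M.tr (Algebra.ofId k (R ⧸ p.asIdeal))
        (M.res (Ideal.Quotient.mkₐ k p.asIdeal) a) := by
  classical
  have hne (p : MaximalSpectrum R) : p.asIdeal ≠ ⊥ :=
    Ring.ne_bot_of_isMaximal_of_not_isField p.isMaximal hR
  induction s using Finset.induction_on with
  | empty =>
    have : Subsingleton (R ⧸ ∏ p ∈ (∅ : Finset (MaximalSpectrum R)), p.asIdeal ^ n p) :=
      Ideal.Quotient.subsingleton_iff.mpr (by simp)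
    rw [tr_ofId_eq_zero_of_subsingleton hM hcoh hadd, Finset.sum_empty]
  | insert q s hq ih =>
    have : Module.Finite k (R ⧸ q.asIdeal ^ n q) :=
      Ideal.finite_quotient_of_ne_bot (pow_ne_zero _ (hne q))
    have : Module.Finite k (R ⧸ ∏ p ∈ s, p.asIdeal ^ n p) :=
      Ideal.finite_quotient_of_ne_bot <|
        Finset.prod_ne_zero_iff.mpr fun p _ => pow_ne_zero _ (hne p)
    have hcop : IsCoprime (q.asIdeal ^ n q) (∏ p ∈ s, p.asIdeal ^ n p) :=
      IsCoprime.prod_right fun p hp =>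
        (MaximalSpectrum.isCoprime_of_ne (ne_of_mem_of_not_mem hp hq).symm).pow
    rw [Finset.prod_insert hq, tr_ofId_res_mk_mul hM hcoh hadd hcop,
      tr_ofId_res_mk_pow hM hcoh hadd htop q.asIdeal (hne q), ih, Finset.sum_insert hq]

end

theorem eval_effective_eq_tr_of_closed_subscheme_general {k : Type} [Field k]
    (M : MackeyFunctor k) (hM : M.IsMackey) (hcoh : M.Cohomological)
    (hadd : M.WeaklyAdditive) (htop : M.WeaklyTopologicallyInvariant)
    (R : Type) [CommRing R] [IsDedekindDomain R] [Algebra k R]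
    [Algebra.FiniteType k R] (hR : ¬ IsField R)
    (D : MaximalSpectrum R →₀ ℕ) (a : M.obj R) :
    M.tr (Algebra.ofId k (R ⧸ ∏ p ∈ D.support, p.asIdeal ^ D p))
        (M.res (Ideal.Quotient.mkₐ k (∏ p ∈ D.support, p.asIdeal ^ D p)) a) =
      M.eval R a (fun p => (D p : ℤ)) := by
  rw [tr_ofId_res_mk_prod hM hcoh hadd htop hR D D.support a, eval,
    finsum_eq_sum_of_support_subset _ (s := D.support) fun p hp => ?_]
  · simp only [natCast_zsmul]
  · exact Finsupp.mem_support_iff.mpr fun h => hp (by simp [h])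

/-- **Evaluation at an effective divisor is the transfer from the divisor viewed as a
closed subscheme** (Lemme 1.1).  Let `A` be a cohomological, weakly additive and weakly
topologically invariant Mackey functor, `U = Spec R` a smooth affine curve over `k`, and
`D = ∑ n_x · x` an effective divisor on `U`, viewed as the closed subscheme
`Spec (R ⧸ ∏ p^{n_p})` finite over `k`.  Then for every `a ∈ A(U)`,
`a(D) = Cor_{D/k}(ι_D^* a)`. -/
theorem eval_effective_eq_tr_of_closed_subscheme {k : Type} [Field k]
    (M : MackeyFunctor k) (hM : M.IsMackey) (hcoh : M.Cohomological)
    (hadd : M.WeaklyAdditive) (htop : M.WeaklyTopologicallyInvariant)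
    (R : Type) [CommRing R] [IsDomain R] [IsDedekindDomain R] [Algebra k R]
    [Algebra.FiniteType k R] (hR : ¬ IsField R)
    (D : MaximalSpectrum R →₀ ℕ) (a : M.obj R) :
    M.tr (Algebra.ofId k (R ⧸ ∏ p ∈ D.support, p.asIdeal ^ D p))
        (M.res (Ideal.Quotient.mkₐ k (∏ p ∈ D.support, p.asIdeal ^ D p)) a) =
      M.eval R a (fun p => (D p : ℤ)) :=
  eval_effective_eq_tr_of_closed_subscheme_general M hM hcoh hadd htop R hR D a
end MackeyFunctor
end

section
/- Let A be a proper Mackey functor (A(O) → A(K) surjective for every k-DVR O with fraction field K). If A admits a local symbol ∂, then ∂ is unique and given by ∂_O(a, x) = v(x)·ā where ā is the reduction of any lift of a to A(O); in particular the kernel of A(O) → A(K) must map to zero in A(l), and conversely if for every henselian k-DVR O the map Ker(A(O) → A(K)) → A(l) is zero, then the formula ∂_O(a,x) = v(x)·ā defines a strong local symbol. -/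
namespace MackeyFunctor

variable {k : Type} [Field k]

/-- A local symbol for a Mackey functor `A`: for every `k`-algebra `O` which is a
discrete valuation ring, with fraction field `K` and residue field `l = O/𝔪`, a
biadditive pairing `∂_O : A(K) × K^* → A(l)` which is continuous in the second variable,
satisfies `∂_O(a, x) = v(x)·ā` for `a` coming from `A(O)` (expressed via its two special
cases: vanishing on units and the uniformizer formula), and which is compatible with
finite extensions. -/
structure LocalSymbol (M : MackeyFunctor k) where
  sym : ∀ (O : Type) [CommRing O] [IsDomain O] [IsDiscreteValuationRing O] [Algebra k O]
      (K : Type) [Field K] [Algebra O K] [IsFractionRing O K] [Algebra k K]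
      [IsScalarTower k O K],
      M.obj K → Kˣ → M.obj (O ⧸ IsLocalRing.maximalIdeal O)
  sym_add : ∀ (O : Type) [CommRing O] [IsDomain O] [IsDiscreteValuationRing O] [Algebra k O]
      (K : Type) [Field K] [Algebra O K] [IsFractionRing O K] [Algebra k K]
      [IsScalarTower k O K] (a b : M.obj K) (x : Kˣ),
      sym O K (a + b) x = sym O K a x + sym O K b x
  sym_mul : ∀ (O : Type) [CommRing O] [IsDomain O] [IsDiscreteValuationRing O] [Algebra k O]
      (K : Type) [Field K] [Algebra O K] [IsFractionRing O K] [Algebra k K]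
      [IsScalarTower k O K] (a : M.obj K) (x y : Kˣ),
      sym O K a (x * y) = sym O K a x + sym O K a y
  /-- Continuity in the second variable: `∂_O(a, -)` kills a congruence subgroup `1 + 𝔪^n`. -/
  sym_cont : ∀ (O : Type) [CommRing O] [IsDomain O] [IsDiscreteValuationRing O] [Algebra k O]
      (K : Type) [Field K] [Algebra O K] [IsFractionRing O K] [Algebra k K]
      [IsScalarTower k O K] (a : M.obj K), ∃ n : ℕ,
      ∀ u : Oˣ, (u : O) - 1 ∈ (IsLocalRing.maximalIdeal O) ^ n →
        sym O K a (Units.map (algebraMap O K : O →* K) u) = 0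
  /-- Property (ii), unit case: if `a` extends to `A(O)` then `∂_O(a, u) = 0` for `u ∈ O^×`. -/
  sym_unit : ∀ (O : Type) [CommRing O] [IsDomain O] [IsDiscreteValuationRing O] [Algebra k O]
      (K : Type) [Field K] [Algebra O K] [IsFractionRing O K] [Algebra k K]
      [IsScalarTower k O K] (a : M.obj O) (u : Oˣ),
      sym O K (M.res (IsScalarTower.toAlgHom k O K) a)
        (Units.map (algebraMap O K : O →* K) u) = 0
  /-- Property (ii), uniformizer case: if `a` extends to `A(O)` then `∂_O(a, π) = ā`. -/
  sym_unif : ∀ (O : Type) [CommRing O] [IsDomain O] [IsDiscreteValuationRing O] [Algebra k O]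
      (K : Type) [Field K] [Algebra O K] [IsFractionRing O K] [Algebra k K]
      [IsScalarTower k O K] (a : M.obj O) (π : O) (_ : Irreducible π)
      (hu : IsUnit (algebraMap O K π)),
      sym O K (M.res (IsScalarTower.toAlgHom k O K) a) hu.unit =
        M.res (Ideal.Quotient.mkₐ k (IsLocalRing.maximalIdeal O)) a

/-- A local symbol is *strong* if `∂_O` kills the principal units `U_1 = 1 + 𝔪`. -/
def LocalSymbol.Strong {M : MackeyFunctor k} (d : LocalSymbol M) : Prop :=
  ∀ (O : Type) [CommRing O] [IsDomain O] [IsDiscreteValuationRing O] [Algebra k O]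
    (K : Type) [Field K] [Algebra O K] [IsFractionRing O K] [Algebra k K]
    [IsScalarTower k O K] (a : M.obj K) (u : Oˣ),
    (u : O) - 1 ∈ IsLocalRing.maximalIdeal O →
      d.sym O K a (Units.map (algebraMap O K : O →* K) u) = 0

end MackeyFunctor

namespace MackeyFunctor

variable {k : Type} [Field k]

/-- A local symbol defined only on *henselian* `k`-discrete valuation rings, with
fraction field `K` and residue field `l`; fields as in `LocalSymbol`.
discrete valuation ring, with fraction field `K` and residue field `l = O/𝔪`, a
biadditive pairing `∂_O : A(K) × K^* → A(l)` which is continuous in the second variable,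
satisfies `∂_O(a, x) = v(x)·ā` for `a` coming from `A(O)` (expressed via its two special
cases: vanishing on units and the uniformizer formula), and which is compatible with
finite extensions. -/
structure HenselianLocalSymbol (M : MackeyFunctor k) where
  sym : ∀ (O : Type) [CommRing O] [IsDomain O] [IsDiscreteValuationRing O] [HenselianLocalRing O] [Algebra k O]
      (K : Type) [Field K] [Algebra O K] [IsFractionRing O K] [Algebra k K]
      [IsScalarTower k O K],
      M.obj K → Kˣ → M.obj (O ⧸ IsLocalRing.maximalIdeal O)
  sym_add : ∀ (O : Type) [CommRing O] [IsDomain O] [IsDiscreteValuationRing O] [HenselianLocalRing O] [Algebra k O]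
      (K : Type) [Field K] [Algebra O K] [IsFractionRing O K] [Algebra k K]
      [IsScalarTower k O K] (a b : M.obj K) (x : Kˣ),
      sym O K (a + b) x = sym O K a x + sym O K b x
  sym_mul : ∀ (O : Type) [CommRing O] [IsDomain O] [IsDiscreteValuationRing O] [HenselianLocalRing O] [Algebra k O]
      (K : Type) [Field K] [Algebra O K] [IsFractionRing O K] [Algebra k K]
      [IsScalarTower k O K] (a : M.obj K) (x y : Kˣ),
      sym O K a (x * y) = sym O K a x + sym O K a y
  /-- Continuity in the second variable: `∂_O(a, -)` kills a congruence subgroup `1 + 𝔪^n`. -/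
  sym_cont : ∀ (O : Type) [CommRing O] [IsDomain O] [IsDiscreteValuationRing O] [HenselianLocalRing O] [Algebra k O]
      (K : Type) [Field K] [Algebra O K] [IsFractionRing O K] [Algebra k K]
      [IsScalarTower k O K] (a : M.obj K), ∃ n : ℕ,
      ∀ u : Oˣ, (u : O) - 1 ∈ (IsLocalRing.maximalIdeal O) ^ n →
        sym O K a (Units.map (algebraMap O K : O →* K) u) = 0
  /-- Property (ii), unit case: if `a` extends to `A(O)` then `∂_O(a, u) = 0` for `u ∈ O^×`. -/
  sym_unit : ∀ (O : Type) [CommRing O] [IsDomain O] [IsDiscreteValuationRing O] [HenselianLocalRing O] [Algebra k O]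
      (K : Type) [Field K] [Algebra O K] [IsFractionRing O K] [Algebra k K]
      [IsScalarTower k O K] (a : M.obj O) (u : Oˣ),
      sym O K (M.res (IsScalarTower.toAlgHom k O K) a)
        (Units.map (algebraMap O K : O →* K) u) = 0
  /-- Property (ii), uniformizer case: if `a` extends to `A(O)` then `∂_O(a, π) = ā`. -/
  sym_unif : ∀ (O : Type) [CommRing O] [IsDomain O] [IsDiscreteValuationRing O] [HenselianLocalRing O] [Algebra k O]
      (K : Type) [Field K] [Algebra O K] [IsFractionRing O K] [Algebra k K]
      [IsScalarTower k O K] (a : M.obj O) (π : O) (_ : Irreducible π)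
      (hu : IsUnit (algebraMap O K π)),
      sym O K (M.res (IsScalarTower.toAlgHom k O K) a) hu.unit =
        M.res (Ideal.Quotient.mkₐ k (IsLocalRing.maximalIdeal O)) a

/-- A local symbol is *strong* if `∂_O` kills the principal units `U_1 = 1 + 𝔪`. -/
def HenselianLocalSymbol.Strong {M : MackeyFunctor k} (d : HenselianLocalSymbol M) : Prop :=
  ∀ (O : Type) [CommRing O] [IsDomain O] [IsDiscreteValuationRing O] [HenselianLocalRing O] [Algebra k O]
    (K : Type) [Field K] [Algebra O K] [IsFractionRing O K] [Algebra k K]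
    [IsScalarTower k O K] (a : M.obj K) (u : Oˣ),
    (u : O) - 1 ∈ IsLocalRing.maximalIdeal O →
      d.sym O K a (Units.map (algebraMap O K : O →* K) u) = 0

end MackeyFunctor

namespace MackeyFunctor

variable {k : Type} [Field k]

/-- `A` is proper: `A(O) → A(K)` is surjective for every `k`-algebra `O` which is a
discrete valuation ring with fraction field `K`. -/
def Proper (M : MackeyFunctor k) : Prop :=
  ∀ (O : Type) [CommRing O] [IsDomain O] [IsDiscreteValuationRing O] [Algebra k O]
    (K : Type) [Field K] [Algebra O K] [IsFractionRing O K] [Algebra k K]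
    [IsScalarTower k O K],
    Function.Surjective (M.res (IsScalarTower.toAlgHom k O K))

end MackeyFunctor

theorem map_zpow_of_map_mul {H G : Type*} [Group H] [AddGroup G] (f : H → G)
    (hf : ∀ x y, f (x * y) = f x + f y) (x : H) (n : ℤ) : f (x ^ n) = n • f x :=
  congrArg Multiplicative.toAdd (map_zpow (MonoidHom.mk' (Multiplicative.ofAdd ∘ f) hf) x n)

namespace IsDiscreteValuationRing

variable (O : Type*) {K : Type*} [CommRing O] [Field K] [Algebra O K] [IsFractionRing O K]

theorem isUnit_algebraMap_of_irreducible {π : O} (hπ : Irreducible π) :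
    IsUnit (algebraMap O K π) :=
  (map_ne_zero_iff _ (IsFractionRing.injective O K)).mpr hπ.ne_zero |>.isUnit

variable [IsDomain O] [IsDiscreteValuationRing O]

theorem exists_eq_zpow_mul_units_map {π : O} (hπ : Irreducible π)
    (hu : IsUnit (algebraMap O K π)) (x : Kˣ) :
    ∃ (n : ℤ) (u : Oˣ), x = hu.unit ^ n * Units.map (algebraMap O K : O →* K) u := by
  obtain ⟨n, u, hx⟩ := exists_units_eq_smul_zpow_of_irreducible hπ x.ne_zero
  refine ⟨n, u, Units.ext ?_⟩
  simp [hx, Units.smul_def, Algebra.smul_def, mul_comm]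

/-- The normalized valuation `v : Kˣ → ℤ`; the sign is there because Mathlib's adic valuation
is multiplicative, with `π ↦ exp (-1)`. -/
noncomputable def ord (x : Kˣ) : ℤ :=
  -WithZero.log ((maximalIdeal O).valuation K x)

theorem ord_mul (x y : Kˣ) : ord O (x * y) = ord O x + ord O y := by
  simp only [ord, Units.val_mul, map_mul]
  rw [WithZero.log_mul (by simp) (by simp), neg_add]

theorem ord_units_map (u : Oˣ) : ord O (Units.map (algebraMap O K : O →* K) u) = 0 := by
  have : (maximalIdeal O).intValuation (u : O) = 1 := by simp [maximalIdeal]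
  simp [ord, IsDedekindDomain.HeightOneSpectrum.valuation_of_algebraMap, this]

theorem ord_of_irreducible {π : O} (hπ : Irreducible π) (hu : IsUnit (algebraMap O K π)) :
    ord O hu.unit = 1 := by
  simp [ord, IsDedekindDomain.HeightOneSpectrum.valuation_of_algebraMap,
    (maximalIdeal O).intValuation_singleton hπ.ne_zero hπ.maximalIdeal_eq]

theorem ord_zpow_mul_units_map {π : O} (hπ : Irreducible π) (hu : IsUnit (algebraMap O K π))
    (n : ℤ) (u : Oˣ) : ord O (hu.unit ^ n * Units.map (algebraMap O K : O →* K) u) = n := by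
  rw [ord_mul, map_zpow_of_map_mul _ (ord_mul O), ord_of_irreducible O hπ, ord_units_map]
  simp

end IsDiscreteValuationRing

namespace MackeyFunctor

open IsDiscreteValuationRing

variable {k : Type} [Field k] {M : MackeyFunctor k}
  {O : Type} [CommRing O] [IsDomain O] [IsDiscreteValuationRing O] [Algebra k O]
  {K : Type} [Field K] [Algebra O K] [IsFractionRing O K] [Algebra k K] [IsScalarTower k O K]

variable (M O K) in
def ResidueVanishesOnKernel : Prop :=
  ∀ b : M.obj O, M.res (IsScalarTower.toAlgHom k O K) b = 0 →
    M.res (Ideal.Quotient.mkₐ k (IsLocalRing.maximalIdeal O)) b = 0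

namespace LocalSymbol

theorem sym_zpow_mul_units_map (d : M.LocalSymbol) (a : M.obj O) {π : O} (hπ : Irreducible π)
    (hu : IsUnit (algebraMap O K π)) (n : ℤ) (u : Oˣ) :
    d.sym O K (M.res (IsScalarTower.toAlgHom k O K) a)
        (hu.unit ^ n * Units.map (algebraMap O K : O →* K) u) =
      n • M.res (Ideal.Quotient.mkₐ k (IsLocalRing.maximalIdeal O)) a := by
  rw [d.sym_mul, map_zpow_of_map_mul _ (d.sym_mul O K _), d.sym_unif O K a π hπ hu,
    d.sym_unit, add_zero]

theorem sym_zero (d : M.LocalSymbol) (x : Kˣ) : d.sym O K 0 x = 0 :=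
  left_eq_add.mp <| by simpa only [add_zero] using d.sym_add O K 0 0 x

variable (O K) in
theorem residueVanishesOnKernel (d : M.LocalSymbol) : M.ResidueVanishesOnKernel O K := by
  intro b hb
  obtain ⟨π, hπ⟩ := exists_irreducible O
  have hu := isUnit_algebraMap_of_irreducible O (K := K) hπ
  rw [← d.sym_unif O K b π hπ hu, hb, sym_zero]

theorem sym_eq_of_proper (hproper : M.Proper) (d d' : M.LocalSymbol) (a : M.obj K) (x : Kˣ) :
    d.sym O K a x = d'.sym O K a x := by
  obtain ⟨a, rfl⟩ := hproper O K a
  obtain ⟨π, hπ⟩ := exists_irreducible O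
  have hu := isUnit_algebraMap_of_irreducible O (K := K) hπ
  obtain ⟨n, u, rfl⟩ := exists_eq_zpow_mul_units_map O hπ hu x
  rw [d.sym_zpow_mul_units_map a hπ hu, d'.sym_zpow_mul_units_map a hπ hu]

end LocalSymbol

namespace Proper

variable (hproper : M.Proper)

variable (O) in
noncomputable def lift (a : M.obj K) : M.obj O := (hproper O K a).choose

theorem res_lift (a : M.obj K) : M.res (IsScalarTower.toAlgHom k O K) (hproper.lift O a) = a :=
  (hproper O K a).choose_spec

variable (O) in
/-- `∂_O(a, x) = v(x) • ā`, with `ā` read off a chosen lift of `a` to `A(O)`. -/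
noncomputable def residueSymbol (a : M.obj K) (x : Kˣ) : M.obj (O ⧸ IsLocalRing.maximalIdeal O) :=
  ord O x • M.res (Ideal.Quotient.mkₐ k (IsLocalRing.maximalIdeal O)) (hproper.lift O a)

theorem residue_lift_eq (hker : M.ResidueVanishesOnKernel O K) {a : M.obj K} {b : M.obj O}
    (hb : M.res (IsScalarTower.toAlgHom k O K) b = a) :
    M.res (Ideal.Quotient.mkₐ k (IsLocalRing.maximalIdeal O)) (hproper.lift O a) =
      M.res (Ideal.Quotient.mkₐ k (IsLocalRing.maximalIdeal O)) b := by
  rw [← sub_eq_zero, ← map_sub]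
  exact hker _ (by rw [map_sub, res_lift, hb, sub_self])

theorem residueSymbol_res (hker : M.ResidueVanishesOnKernel O K) (a : M.obj O) (x : Kˣ) :
    hproper.residueSymbol O (M.res (IsScalarTower.toAlgHom k O K) a) x =
      ord O x • M.res (Ideal.Quotient.mkₐ k (IsLocalRing.maximalIdeal O)) a := by
  rw [residueSymbol, hproper.residue_lift_eq hker rfl]

theorem residueSymbol_add (hker : M.ResidueVanishesOnKernel O K) (a b : M.obj K) (x : Kˣ) :
    hproper.residueSymbol O (a + b) x =
      hproper.residueSymbol O a x + hproper.residueSymbol O b x := by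
  have hlift : M.res (Ideal.Quotient.mkₐ k (IsLocalRing.maximalIdeal O)) (hproper.lift O (a + b)) =
      M.res (Ideal.Quotient.mkₐ k (IsLocalRing.maximalIdeal O))
        (hproper.lift O a + hproper.lift O b) :=
    hproper.residue_lift_eq hker (by rw [map_add, res_lift, res_lift])
  rw [residueSymbol, residueSymbol, residueSymbol, hlift, map_add, smul_add]

theorem residueSymbol_mul (a : M.obj K) (x y : Kˣ) :
    hproper.residueSymbol O a (x * y) =
      hproper.residueSymbol O a x + hproper.residueSymbol O a y := by
  rw [residueSymbol, residueSymbol, residueSymbol, ord_mul, add_smul]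

theorem residueSymbol_units_map (a : M.obj K) (u : Oˣ) :
    hproper.residueSymbol O a (Units.map (algebraMap O K : O →* K) u) = 0 := by
  rw [residueSymbol, ord_units_map, zero_smul]

variable (O) in
theorem residueSymbol_res_zpow_mul_units_map (hker : M.ResidueVanishesOnKernel O K) (a : M.obj O)
    {π : O} (hπ : Irreducible π) (hu : IsUnit (algebraMap O K π)) (n : ℤ) (u : Oˣ) :
    hproper.residueSymbol O (M.res (IsScalarTower.toAlgHom k O K) a)
        (hu.unit ^ n * Units.map (algebraMap O K : O →* K) u) =
      n • M.res (Ideal.Quotient.mkₐ k (IsLocalRing.maximalIdeal O)) a := by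
  rw [hproper.residueSymbol_res hker, ord_zpow_mul_units_map O hπ hu]

noncomputable def henselianResidueSymbol
    (hker : ∀ (O : Type) [CommRing O] [IsDomain O] [IsDiscreteValuationRing O]
      [HenselianLocalRing O] [Algebra k O] (K : Type) [Field K] [Algebra O K]
      [IsFractionRing O K] [Algebra k K] [IsScalarTower k O K], M.ResidueVanishesOnKernel O K) :
    M.HenselianLocalSymbol where
  sym O _ _ _ _ _ _ _ _ _ _ _ := hproper.residueSymbol O
  sym_add O _ _ _ _ _ K _ _ _ _ _ := hproper.residueSymbol_add (hker O K)
  sym_mul _ _ _ _ _ _ _ _ _ _ _ _ := hproper.residueSymbol_mul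
  sym_cont _ _ _ _ _ _ _ _ _ _ _ _ a := ⟨0, fun u _ => hproper.residueSymbol_units_map a u⟩
  sym_unit _ _ _ _ _ _ _ _ _ _ _ _ a := hproper.residueSymbol_units_map _
  sym_unif O _ _ _ _ _ K _ _ _ _ _ a π hπ hu := by
    rw [hproper.residueSymbol_res (hker O K), ord_of_irreducible O hπ, one_smul]

end Proper

theorem proper_localSymbol_iff_kernel_vanishes_general (M : MackeyFunctor k)
    (hproper : M.Proper) :
    (∀ d : M.LocalSymbol,
      (∀ (O : Type) [CommRing O] [IsDomain O] [IsDiscreteValuationRing O] [Algebra k O]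
        (K : Type) [Field K] [Algebra O K] [IsFractionRing O K] [Algebra k K]
        [IsScalarTower k O K] (atilde : M.obj O) (π : O) (_ : Irreducible π)
        (hu : IsUnit (algebraMap O K π)) (n : ℤ) (u : Oˣ),
        d.sym O K (M.res (IsScalarTower.toAlgHom k O K) atilde)
            (hu.unit ^ n * Units.map (algebraMap O K : O →* K) u) =
          n • M.res (Ideal.Quotient.mkₐ k (IsLocalRing.maximalIdeal O)) atilde) ∧
      (∀ (O : Type) [CommRing O] [IsDomain O] [IsDiscreteValuationRing O] [Algebra k O]
        (K : Type) [Field K] [Algebra O K] [IsFractionRing O K] [Algebra k K]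
        [IsScalarTower k O K] (b : M.obj O),
        M.res (IsScalarTower.toAlgHom k O K) b = 0 →
          M.res (Ideal.Quotient.mkₐ k (IsLocalRing.maximalIdeal O)) b = 0) ∧
      (∀ d' : M.LocalSymbol,
        ∀ (O : Type) [CommRing O] [IsDomain O] [IsDiscreteValuationRing O] [Algebra k O]
        (K : Type) [Field K] [Algebra O K] [IsFractionRing O K] [Algebra k K]
        [IsScalarTower k O K] (a : M.obj K) (x : Kˣ),
        d.sym O K a x = d'.sym O K a x)) ∧
    ((∀ (O : Type) [CommRing O] [IsDomain O] [IsDiscreteValuationRing O]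
        [HenselianLocalRing O] [Algebra k O]
        (K : Type) [Field K] [Algebra O K] [IsFractionRing O K] [Algebra k K]
        [IsScalarTower k O K] (b : M.obj O),
        M.res (IsScalarTower.toAlgHom k O K) b = 0 →
          M.res (Ideal.Quotient.mkₐ k (IsLocalRing.maximalIdeal O)) b = 0) →
      ∃ d : M.HenselianLocalSymbol, d.Strong ∧
        ∀ (O : Type) [CommRing O] [IsDomain O] [IsDiscreteValuationRing O]
          [HenselianLocalRing O] [Algebra k O]
          (K : Type) [Field K] [Algebra O K] [IsFractionRing O K] [Algebra k K]
          [IsScalarTower k O K] (atilde : M.obj O) (π : O) (_ : Irreducible π)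
          (hu : IsUnit (algebraMap O K π)) (n : ℤ) (u : Oˣ),
          d.sym O K (M.res (IsScalarTower.toAlgHom k O K) atilde)
              (hu.unit ^ n * Units.map (algebraMap O K : O →* K) u) =
            n • M.res (Ideal.Quotient.mkₐ k (IsLocalRing.maximalIdeal O)) atilde) := by
  refine ⟨fun d => ⟨?_, ?_, ?_⟩, fun hker => ⟨hproper.henselianResidueSymbol hker, ?_, ?_⟩⟩
  · exact fun O _ _ _ _ K _ _ _ _ _ a π hπ hu n u => d.sym_zpow_mul_units_map a hπ hu n u
  · exact fun O _ _ _ _ K _ _ _ _ _ => d.residueVanishesOnKernel O K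
  · exact fun d' O _ _ _ _ K _ _ _ _ _ => d.sym_eq_of_proper hproper d'
  · exact fun O _ _ _ _ _ K _ _ _ _ _ a u _ => hproper.residueSymbol_units_map a u
  · exact fun O _ _ _ _ _ K _ _ _ _ _ =>
      hproper.residueSymbol_res_zpow_mul_units_map O (hker O K)

/-- **Local symbols on a proper Mackey functor** (Proposition 5.1).  Let `A` be a proper
Mackey functor.  (1) Any local symbol `∂` on `A` is given by the formula
`∂_O(a, x) = v(x)·ā` (where `ā` is the reduction of any lift of `a` to `A(O)`), is unique,
and forces the kernel of `A(O) → A(K)` to die in `A(l)`.  (2) Conversely, if for every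
henselian `k`-discrete valuation ring `O` the map `Ker(A(O) → A(K)) → A(l)` is zero, then
this formula defines a (strong) local symbol. -/
theorem proper_localSymbol_iff_kernel_vanishes (M : MackeyFunctor k)
    (hM : M.IsMackey) (hproper : M.Proper) :
    (∀ d : M.LocalSymbol,
      (∀ (O : Type) [CommRing O] [IsDomain O] [IsDiscreteValuationRing O] [Algebra k O]
        (K : Type) [Field K] [Algebra O K] [IsFractionRing O K] [Algebra k K]
        [IsScalarTower k O K] (atilde : M.obj O) (π : O) (_ : Irreducible π)
        (hu : IsUnit (algebraMap O K π)) (n : ℤ) (u : Oˣ),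
        d.sym O K (M.res (IsScalarTower.toAlgHom k O K) atilde)
            (hu.unit ^ n * Units.map (algebraMap O K : O →* K) u) =
          n • M.res (Ideal.Quotient.mkₐ k (IsLocalRing.maximalIdeal O)) atilde) ∧
      (∀ (O : Type) [CommRing O] [IsDomain O] [IsDiscreteValuationRing O] [Algebra k O]
        (K : Type) [Field K] [Algebra O K] [IsFractionRing O K] [Algebra k K]
        [IsScalarTower k O K] (b : M.obj O),
        M.res (IsScalarTower.toAlgHom k O K) b = 0 →
          M.res (Ideal.Quotient.mkₐ k (IsLocalRing.maximalIdeal O)) b = 0) ∧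
      (∀ d' : M.LocalSymbol,
        ∀ (O : Type) [CommRing O] [IsDomain O] [IsDiscreteValuationRing O] [Algebra k O]
        (K : Type) [Field K] [Algebra O K] [IsFractionRing O K] [Algebra k K]
        [IsScalarTower k O K] (a : M.obj K) (x : Kˣ),
        d.sym O K a x = d'.sym O K a x)) ∧
    ((∀ (O : Type) [CommRing O] [IsDomain O] [IsDiscreteValuationRing O]
        [HenselianLocalRing O] [Algebra k O]
        (K : Type) [Field K] [Algebra O K] [IsFractionRing O K] [Algebra k K]
        [IsScalarTower k O K] (b : M.obj O),
        M.res (IsScalarTower.toAlgHom k O K) b = 0 →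
          M.res (Ideal.Quotient.mkₐ k (IsLocalRing.maximalIdeal O)) b = 0) →
      ∃ d : M.HenselianLocalSymbol, d.Strong ∧
        ∀ (O : Type) [CommRing O] [IsDomain O] [IsDiscreteValuationRing O]
          [HenselianLocalRing O] [Algebra k O]
          (K : Type) [Field K] [Algebra O K] [IsFractionRing O K] [Algebra k K]
          [IsScalarTower k O K] (atilde : M.obj O) (π : O) (_ : Irreducible π)
          (hu : IsUnit (algebraMap O K π)) (n : ℤ) (u : Oˣ),
          d.sym O K (M.res (IsScalarTower.toAlgHom k O K) atilde)
              (hu.unit ^ n * Units.map (algebraMap O K : O →* K) u) =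
            n • M.res (Ideal.Quotient.mkₐ k (IsLocalRing.maximalIdeal O)) atilde) :=
  proper_localSymbol_iff_kernel_vanishes_general M hproper

end MackeyFunctor
end
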